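/- arXiv:0709.1048 — 3 statements merged into one kernel-verified Lean document; each statement's English description precedes it below -/
import Mathlib

section
/- Let Ω₊, Ω₋, Ω₀ be complex numbers and set φ = ((Ω₀/2)² - Ω₊Ω₋)^{1/2} with φ ≠ 0 and cosh(φ) - (Ω₀/(2φ))sinh(φ) ≠ 0. Define A₊ = (Ω₊/φ)sinh(φ)/(cosh(φ) - (Ω₀/(2φ))sinh(φ)), A₋ analogously with Ω₋, and A₀ = (cosh(φ) - (Ω₀/(2φ))sinh(φ))^{-2}. Then in the 2×2 matrix representation K₊ = [[0,1],[0,0]], K₋ = [[0,0],[-1,0]], K₀ = (1/2)[[1,0],[0,-1]], the matrix identity exp(Ω₊K₊ + Ω₀K₀ + Ω₋K₋) = exp(A₊K₊) · exp(ln(A₀)K₀) · exp(A₋K₋) holds. -/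
/-!
The matrix `M = Ωp K₊ + Ω0 K₀ + Ωm K₋` is traceless, so `M² = φ² • 1` and the exponential
series collapses to `exp M = cosh φ • 1 + (sinh φ / φ) • M`. This matrix has determinant
`cosh² φ - sinh² φ = 1` and lower-right entry `D = cosh φ - (Ω0 / (2φ)) sinh φ ≠ 0`, so it has
a Gauss decomposition (upper unitriangular) · `diag(D⁻¹, D)` · (lower unitriangular). The
unitriangular factors are `1 + A₊K₊ = exp (A₊K₊)` and `1 + A₋K₋ = exp (A₋K₋)`, as
`K₊² = K₋² = 0`.
-/

open Matrix Complex

namespace NormedSpace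

variable {𝔸 : Type*} [Ring 𝔸] [TopologicalSpace 𝔸] [IsTopologicalRing 𝔸]

theorem exp_eq_one_add_of_sq_eq_zero [Algebra ℚ 𝔸] {x : 𝔸} (hx : x ^ 2 = 0) :
    exp x = 1 + x := by
  rw [exp_eq_tsum_rat]
  refine (tsum_eq_sum (s := Finset.range 2) fun n hn => ?_).trans ?_
  · rw [pow_eq_zero_of_le (by simp at hn; omega) hx, smul_zero]
  · simp [Finset.sum_range_succ]

theorem exp_eq_cosh_smul_one_add_sinh_div_smul [Algebra ℂ 𝔸] [ContinuousSMul ℂ 𝔸] [T2Space 𝔸]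
    {x : 𝔸} {φ : ℂ} (hφ : φ ≠ 0) (hx : x ^ 2 = φ ^ 2 • 1) :
    exp x = cosh φ • 1 + (sinh φ / φ) • x := by
  have heven (n : ℕ) : x ^ (2 * n) = φ ^ (2 * n) • 1 := by
    rw [pow_mul, hx, smul_pow, one_pow, ← pow_mul]
  rw [exp_eq_tsum ℂ]
  refine HasSum.tsum_eq (HasSum.even_add_odd ?_ ?_)
  · convert (hasSum_cosh φ).smul_const (1 : 𝔸) using 2 with n
    rw [heven, smul_smul, div_eq_inv_mul]
  · convert ((hasSum_sinh φ).div_const φ).smul_const x using 2 with n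
    rw [pow_succ, heven, smul_mul_assoc, one_mul, smul_smul]
    congr 1
    field_simp
    ring

end NormedSpace

namespace Matrix

variable {R : Type*} [CommRing R]

theorem traceless_sq_fin_two (a b c : R) : !![a, b; c, -a] ^ 2 = (a ^ 2 + b * c) • 1 := by
  ext i j
  fin_cases i <;> fin_cases j <;> simp [sq] <;> ring

theorem fin_two_eq_upper_mul_diagonal_mul_lower {K : Type*} [Field K] {a b c d : K}
    (hd : d ≠ 0) (hdet : a * d - b * c = 1) :
    !![a, b; c, d] = !![1, b / d; 0, 1] * !![d⁻¹, 0; 0, d] * !![1, 0; c / d, 1] := by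
  rw [mul_fin_two, mul_fin_two]
  ext i j
  fin_cases i <;> fin_cases j <;> simp <;> field_simp
  linear_combination hdet

variable [TopologicalSpace R] [IsTopologicalRing R] [Algebra ℚ R]

theorem exp_strictUpperTriangular_fin_two (b : R) :
    NormedSpace.exp !![0, b; 0, 0] = !![1, b; 0, 1] := by
  rw [NormedSpace.exp_eq_one_add_of_sq_eq_zero
    (by simp [sq, ← Matrix.ext_iff, Fin.forall_fin_two])]
  simp [one_fin_two]

theorem exp_strictLowerTriangular_fin_two (c : R) :
    NormedSpace.exp !![0, 0; c, 0] = !![1, 0; c, 1] := by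
  rw [NormedSpace.exp_eq_one_add_of_sq_eq_zero
    (by simp [sq, ← Matrix.ext_iff, Fin.forall_fin_two])]
  simp [one_fin_two]

end Matrix

/-- Ban's normal-order decomposition formula for `exp(Ω₊K₊ + Ω₀K₀ + Ω₋K₋)` in the
faithful 2×2 representation of 𝔰𝔲(1,1); the middle factor `exp(ln(A₀)K₀)` is taken
as the diagonal matrix `diag(A₀^{1/2}, A₀^{-1/2})` with
`A₀^{1/2} = (cosh φ - (Ω₀/(2φ)) sinh φ)⁻¹`. -/
theorem su11_normal_order_decomposition
    (Ωp Ωm Ω0 φ : ℂ)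
    (hφ : φ ^ 2 = (Ω0 / 2) ^ 2 - Ωp * Ωm)
    (hφ0 : φ ≠ 0)
    (hd : Complex.cosh φ - (Ω0 / (2 * φ)) * Complex.sinh φ ≠ 0)
    (Kp Km K0 : Matrix (Fin 2) (Fin 2) ℂ)
    (hKp : Kp = !![0, 1; 0, 0])
    (hKm : Km = !![0, 0; -1, 0])
    (hK0 : K0 = (1/2 : ℂ) • !![1, 0; 0, -1])
    (Ap Am A0h : ℂ)
    (hAp : Ap = (Ωp / φ) * Complex.sinh φ /
      (Complex.cosh φ - (Ω0 / (2 * φ)) * Complex.sinh φ))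
    (hAm : Am = (Ωm / φ) * Complex.sinh φ /
      (Complex.cosh φ - (Ω0 / (2 * φ)) * Complex.sinh φ))
    (hA0h : A0h = (Complex.cosh φ - (Ω0 / (2 * φ)) * Complex.sinh φ)⁻¹) :
    NormedSpace.exp (Ωp • Kp + Ω0 • K0 + Ωm • Km) =
      NormedSpace.exp (Ap • Kp) * !![A0h, 0; 0, A0h⁻¹] *
        NormedSpace.exp (Am • Km) := by
  subst hKp hKm hK0 hAp hAm hA0h
  set D := cosh φ - Ω0 / (2 * φ) * sinh φ
  have hM : Ωp • !![0, 1; 0, 0] + Ω0 • (1 / 2 : ℂ) • !![1, 0; 0, -1] + Ωm • !![0, 0; -1, 0] =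
      !![Ω0 / 2, Ωp; -Ωm, -(Ω0 / 2)] := by
    ext i j
    fin_cases i <;> fin_cases j <;> simp <;> ring
  have hM_sq : !![Ω0 / 2, Ωp; -Ωm, -(Ω0 / 2)] ^ 2 = φ ^ 2 • 1 := by
    rw [traceless_sq_fin_two, hφ]
    congr 1
    ring
  have hexp : NormedSpace.exp !![Ω0 / 2, Ωp; -Ωm, -(Ω0 / 2)] =
      !![cosh φ + Ω0 / (2 * φ) * sinh φ, Ωp / φ * sinh φ; -(Ωm / φ * sinh φ), D] := by
    rw [NormedSpace.exp_eq_cosh_smul_one_add_sinh_div_smul hφ0 hM_sq]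
    ext i j
    fin_cases i <;> fin_cases j <;> simp [D] <;> ring
  have hdet : (cosh φ + Ω0 / (2 * φ) * sinh φ) * D - Ωp / φ * sinh φ * -(Ωm / φ * sinh φ) = 1 := by
    have hcosh := cosh_sq φ
    simp only [D]
    field_simp
    linear_combination (4 * φ ^ 2) * hcosh + (4 * sinh φ ^ 2) * hφ
  rw [hM, hexp, fin_two_eq_upper_mul_diagonal_mul_lower hd hdet]
  simp [exp_strictUpperTriangular_fin_two, exp_strictLowerTriangular_fin_two, neg_div]
end

section
/- Let Λ₊, Λ₋, Λ₀ be complex numbers, θ = ((Λ₀/2)² - Λ₊Λ₋)^{1/2} with θ ≠ 0 and cosh(θ) + (Λ₀/(2θ))sinh(θ) ≠ 0. Define B₊ = (Λ₊/θ)sinh(θ)/(cosh(θ) + (Λ₀/(2θ))sinh(θ)), B₋ analogously with Λ₋, and B₀ = (cosh(θ) + (Λ₀/(2θ))sinh(θ))². Then in the 2×2 matrix representation K₊ = [[0,1],[0,0]], K₋ = [[0,0],[-1,0]], K₀ = (1/2)[[1,0],[0,-1]], the antinormal-order decomposition exp(Λ₊K₊ + Λ₀K₀ + Λ₋K₋)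 = exp(B₋K₋) · exp(ln(B₀)K₀) · exp(B₊K₊) holds. -/
/-!
The generator matrix `M = Λ₊K₊ + Λ₀K₀ + Λ₋K₋` squares to `θ² • 1`, so its exponential series
collapses to `cosh θ • 1 + (sinh θ / θ) • M`. This matrix has determinant `cosh² θ - sinh² θ = 1`
and top-left entry `B₀^{1/2} ≠ 0`, so it has a Gauss decomposition
lower unitriangular · diagonal · upper unitriangular, and the two unitriangular factors are the
exponentials of the square-zero matrices `B₋K₋` and `B₊K₊`.
-/

open Matrix Complex

section
variable {A : Type*} [Ring A] [TopologicalSpace A] [IsTopologicalRing A]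

theorem NormedSpace.exp_eq_one_add_of_sq_eq_zero_s3 [Algebra ℚ A] {x : A} (hx : x ^ 2 = 0) :
    NormedSpace.exp x = 1 + x := by
  rw [NormedSpace.exp_eq_tsum_rat]
  dsimp only
  rw [tsum_eq_sum (s := Finset.range 2)]
  · simp [Finset.sum_range_succ]
  · intro n hn
    obtain ⟨k, rfl⟩ : ∃ k, n = 2 + k := ⟨n - 2, by simp at hn; omega⟩
    rw [pow_add, hx, zero_mul, smul_zero]

theorem NormedSpace.exp_eq_cosh_add_sinh_div_smul_of_sq_eq [T2Space A] [Algebra ℂ A] [ContinuousSMul ℂ A]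
    {x : A} {θ : ℂ} (hθ : θ ≠ 0) (hx : x ^ 2 = θ ^ 2 • 1) :
    NormedSpace.exp x = cosh θ • 1 + (sinh θ / θ) • x := by
  have hEven (k : ℕ) : x ^ (2 * k) = θ ^ (2 * k) • (1 : A) := by
    rw [pow_mul, hx, smul_pow, one_pow, ← pow_mul]
  have hOdd (k : ℕ) : x ^ (2 * k + 1) = θ ^ (2 * k) • x := by
    rw [pow_succ, hEven, smul_mul_assoc, one_mul]
  rw [NormedSpace.exp_eq_tsum ℂ]
  refine HasSum.tsum_eq (HasSum.even_add_odd ?_ ?_)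
  · convert (hasSum_cosh θ).smul_const (1 : A) using 2 with k
    rw [hEven, smul_smul, div_eq_mul_inv, mul_comm]
  · convert ((hasSum_sinh θ).div_const θ).smul_const x using 2 with k
    rw [hOdd, smul_smul, pow_succ]
    field_simp
end

section
variable {R : Type*} [CommRing R] [TopologicalSpace R] [IsTopologicalRing R] [Algebra ℚ R]

theorem Matrix.exp_fin_two_upper (b : R) :
    NormedSpace.exp !![0, b; 0, 0] = !![1, b; 0, 1] := by
  rw [NormedSpace.exp_eq_one_add_of_sq_eq_zero_s3]
  · ext i j; fin_cases i <;> fin_cases j <;> simp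
  · ext i j; fin_cases i <;> fin_cases j <;> simp [sq]

theorem Matrix.exp_fin_two_lower (c : R) :
    NormedSpace.exp !![0, 0; c, 0] = !![1, 0; c, 1] := by
  rw [NormedSpace.exp_eq_one_add_of_sq_eq_zero_s3]
  · ext i j; fin_cases i <;> fin_cases j <;> simp
  · ext i j; fin_cases i <;> fin_cases j <;> simp [sq]
end

theorem Matrix.fin_two_eq_lower_mul_diagonal_mul_upper {K : Type*} [Field K] {p q r s : K}
    (hp : p ≠ 0) (hdet : p * s - q * r = 1) :
    !![p, q; r, s] = !![1, 0; r / p, 1] * !![p, 0; 0, p⁻¹] * !![1, q / p; 0, 1] := by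
  ext i j; fin_cases i <;> fin_cases j <;> simp <;> field_simp
  linear_combination hdet

/-- The middle factor `exp(ln(B₀)K₀)` is taken as `diag(B₀^{1/2}, B₀^{-1/2})` with
`B₀^{1/2} = cosh θ + (Λ₀/(2θ)) sinh θ`, which avoids choosing a branch of `ln`. -/
theorem su11_antinormal_order_decomposition
    (Λp Λm Λ0 θ : ℂ)
    (hθ : θ ^ 2 = (Λ0 / 2) ^ 2 - Λp * Λm)
    (hθ0 : θ ≠ 0)
    (hd : Complex.cosh θ + (Λ0 / (2 * θ)) * Complex.sinh θ ≠ 0)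
    (Kp Km K0 : Matrix (Fin 2) (Fin 2) ℂ)
    (hKp : Kp = !![0, 1; 0, 0])
    (hKm : Km = !![0, 0; -1, 0])
    (hK0 : K0 = (1/2 : ℂ) • !![1, 0; 0, -1])
    (Bp Bm B0h : ℂ)
    (hBp : Bp = (Λp / θ) * Complex.sinh θ /
      (Complex.cosh θ + (Λ0 / (2 * θ)) * Complex.sinh θ))
    (hBm : Bm = (Λm / θ) * Complex.sinh θ /
      (Complex.cosh θ + (Λ0 / (2 * θ)) * Complex.sinh θ))
    (hB0h : B0h = Complex.cosh θ + (Λ0 / (2 * θ)) * Complex.sinh θ) :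
    NormedSpace.exp (Λp • Kp + Λ0 • K0 + Λm • Km) =
      NormedSpace.exp (Bm • Km) * !![B0h, 0; 0, B0h⁻¹] *
        NormedSpace.exp (Bp • Kp) := by
  subst hKp hKm hK0 hBp hBm hB0h
  have hGen : Λp • !![0, 1; 0, 0] + Λ0 • ((1 / 2 : ℂ) • !![1, 0; 0, -1]) +
      Λm • !![0, 0; -1, 0] = !![Λ0 / 2, Λp; -Λm, -Λ0 / 2] := by
    ext i j; fin_cases i <;> fin_cases j <;> simp <;> ring
  have hSq : !![Λ0 / 2, Λp; -Λm, -Λ0 / 2] ^ 2 = θ ^ 2 • (1 : Matrix (Fin 2) (Fin 2) ℂ) := by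
    rw [hθ]
    ext i j; fin_cases i <;> fin_cases j <;> simp [sq] <;> ring
  have hExp : NormedSpace.exp !![Λ0 / 2, Λp; -Λm, -Λ0 / 2] =
      !![cosh θ + Λ0 / (2 * θ) * sinh θ, Λp / θ * sinh θ;
        -(Λm / θ * sinh θ), cosh θ - Λ0 / (2 * θ) * sinh θ] := by
    rw [NormedSpace.exp_eq_cosh_add_sinh_div_smul_of_sq_eq hθ0 hSq]
    ext i j; fin_cases i <;> fin_cases j <;> simp <;> ring
  have hDet : (cosh θ + Λ0 / (2 * θ) * sinh θ) * (cosh θ - Λ0 / (2 * θ) * sinh θ) -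
      Λp / θ * sinh θ * -(Λm / θ * sinh θ) = 1 := by
    field_simp
    linear_combination (4 * θ ^ 2) * cosh_sq_sub_sinh_sq θ + (4 * sinh θ ^ 2) * hθ
  rw [hGen, hExp, Matrix.fin_two_eq_lower_mul_diagonal_mul_upper hd hDet]
  simp only [smul_of, smul_cons, smul_eq_mul, mul_zero, mul_neg, mul_one, smul_empty]
  rw [Matrix.exp_fin_two_lower, Matrix.exp_fin_two_upper, neg_div]
end

section
/- Let n̄ₐ, n̄_b ≥ 0 and define, for s ≥ 0, the entropies E(s) = 2 + ln G(1,1;s), E_A(s) = 1 + ln G(1,0;s), E_B(s) = 1 + ln G(0,1;s) with G(x,y;s) = (n̄ₐx+1)(n̄_b y+1) + (n̄ₐ+n̄_b+1)s. Then the correlation functional C(s) = 2(1 - E(s)/(E_A(s)+E_B(s))) satisfies C(0) = 0, C(s) ∈ [0,1) for all s ≥ 0, and C(s) → 1 as s → ∞. -/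
open Filter

set_option maxHeartbeats 1000000

/-- Correlation functional of the thermal-state example: with
`G(x,y;s) = (n̄ₐx+1)(n̄_by+1) + (n̄ₐ+n̄_b+1)s`, `E(s) = 2 + ln G(1,1;s)`,
`E_A(s) = 1 + ln G(1,0;s)`, `E_B(s) = 1 + ln G(0,1;s)`, the functional
`C(s) = 2(1 - E(s)/(E_A(s)+E_B(s)))` vanishes at `s = 0`, lies in `[0,1)` for `s ≥ 0`,
and tends to 1 as `s → ∞`. -/
theorem thermal_correlation_functional
    (na nb : ℝ) (hna : 0 ≤ na) (hnb : 0 ≤ nb)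
    (G : ℝ → ℝ → ℝ → ℝ)
    (hG : ∀ x y s, G x y s = (na * x + 1) * (nb * y + 1) + (na + nb + 1) * s)
    (E EA EB C : ℝ → ℝ)
    (hE : ∀ s, E s = 2 + Real.log (G 1 1 s))
    (hEA : ∀ s, EA s = 1 + Real.log (G 1 0 s))
    (hEB : ∀ s, EB s = 1 + Real.log (G 0 1 s))
    (hC : ∀ s, C s = 2 * (1 - E s / (EA s + EB s))) :
    C 0 = 0 ∧
    (∀ s ≥ (0 : ℝ), 0 ≤ C s ∧ C s < 1) ∧
    Tendsto C atTop (nhds 1) := by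
  set a : ℝ := na + 1 with ha_def
  set b : ℝ := nb + 1 with hb_def
  set k : ℝ := na + nb + 1 with hk_def
  have ha : (1:ℝ) ≤ a := by rw [ha_def]; linarith
  have hb : (1:ℝ) ≤ b := by rw [hb_def]; linarith
  have hk : (1:ℝ) ≤ k := by rw [hk_def]; linarith
  have hkab : k = a + b - 1 := by rw [ha_def, hb_def, hk_def]; ring
  have hG11 : ∀ s, G 1 1 s = a * b + k * s := by
    intro s; rw [hG, ha_def, hb_def]; ring
  have hG10 : ∀ s, G 1 0 s = a + k * s := by
    intro s; rw [hG, ha_def]; ring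
  have hG01 : ∀ s, G 0 1 s = b + k * s := by
    intro s; rw [hG, hb_def]; ring
  -- positivity for s ≥ 0
  have hp1 : ∀ s : ℝ, 0 ≤ s → (1:ℝ) ≤ a + k * s := fun s hs => by nlinarith
  have hp2 : ∀ s : ℝ, 0 ≤ s → (1:ℝ) ≤ b + k * s := fun s hs => by nlinarith
  have hp3 : ∀ s : ℝ, 0 ≤ s → (1:ℝ) ≤ a * b + k * s := fun s hs => by nlinarith
  -- log nonnegativity
  have hlp : ∀ s : ℝ, 0 ≤ s → 0 ≤ Real.log (a + k * s) :=
    fun s hs => Real.log_nonneg (hp1 s hs)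
  have hlq : ∀ s : ℝ, 0 ≤ s → 0 ≤ Real.log (b + k * s) :=
    fun s hs => Real.log_nonneg (hp2 s hs)
  have hlr : ∀ s : ℝ, 0 ≤ s → 0 ≤ Real.log (a * b + k * s) :=
    fun s hs => Real.log_nonneg (hp3 s hs)
  -- closed formula for C
  have hCf : ∀ s : ℝ, 0 ≤ s → C s =
      2 * (Real.log (a + k*s) + Real.log (b + k*s) - Real.log (a*b + k*s)) /
        (2 + Real.log (a + k*s) + Real.log (b + k*s)) := by
    intro s hs
    rw [hC, hE, hEA, hEB, hG11, hG10, hG01]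
    set p := Real.log (a + k*s) with hp_def
    set q := Real.log (b + k*s) with hq_def
    set r := Real.log (a*b + k*s) with hr_def
    have hp0 : 0 ≤ p := hlp s hs
    have hq0 : 0 ≤ q := hlq s hs
    have hD1 : (2:ℝ) + p + q ≠ 0 := by positivity
    have hD2 : (1:ℝ) + p + (1 + q) ≠ 0 := by positivity
    field_simp
    ring
  refine ⟨?_, ?_, ?_⟩
  · -- C 0 = 0
    have h := hCf 0 le_rfl
    have hmul : Real.log (a*b + k*0) = Real.log (a + k*0) + Real.log (b + k*0) := by
      simp only [mul_zero, add_zero]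
      exact Real.log_mul (by linarith) (by linarith)
    rw [h, hmul]; ring
  · -- bounds
    intro s hs
    have hks : 0 ≤ k * s := mul_nonneg (by linarith) hs
    have hP : Real.log (a + k*s) + Real.log (b + k*s) = Real.log ((a + k*s) * (b + k*s)) :=
      (Real.log_mul (by nlinarith [hp1 s hs]) (by nlinarith [hp2 s hs])).symm
    have hD : 0 < 2 + Real.log (a + k*s) + Real.log (b + k*s) := by
      have := hlp s hs; have := hlq s hs; linarith
    have hge : Real.log (a*b + k*s) ≤ Real.log (a + k*s) + Real.log (b + k*s) := by
      rw [hP]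
      refine Real.log_le_log (by nlinarith [hp3 s hs]) ?_
      nlinarith [hkab, mul_nonneg hks (by linarith : (0:ℝ) ≤ k), sq_nonneg (k*s)]
    have hle : Real.log (a + k*s) + Real.log (b + k*s) ≤ 2 * Real.log (a*b + k*s) := by
      rw [hP, two_mul, ← Real.log_mul (by nlinarith [hp3 s hs]) (by nlinarith [hp3 s hs])]
      refine Real.log_le_log (by nlinarith [hp1 s hs, hp2 s hs]) ?_
      have h2 : 0 ≤ a*(b-1) := mul_nonneg (by linarith) (by linarith)
      have h3 : 0 ≤ b*(a-1) := mul_nonneg (by linarith) (by linarith)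
      have h4 : 0 ≤ a*b*(a*b-1) := mul_nonneg (by nlinarith) (by nlinarith)
      nlinarith [mul_nonneg hks h2, mul_nonneg hks h3, h4]
    rw [hCf s hs]
    constructor
    · exact div_nonneg (by linarith) hD.le
    · rw [div_lt_one hD]
      have := hlr s hs
      linarith
  · -- limit
    have hlim1 : ∀ c : ℝ, 0 < c → Tendsto (fun s : ℝ => Real.log (c / s + k)) atTop
        (nhds (Real.log k)) := by
      intro c hc
      have h1 : Tendsto (fun s : ℝ => c / s + k) atTop (nhds (0 + k)) :=
        (tendsto_const_nhds.div_atTop tendsto_id).add tendsto_const_nhds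
      rw [zero_add] at h1
      exact ((Real.continuousAt_log (by linarith)).tendsto).comp h1
    have hA : Tendsto (fun s : ℝ => Real.log (a/s + k) + Real.log (b/s + k)
        - Real.log (a*b/s + k)) atTop (nhds (Real.log k)) := by
      have := ((hlim1 a (by linarith)).add (hlim1 b (by linarith))).sub
        (hlim1 (a*b) (by nlinarith))
      simpa using this
    have hB : Tendsto (fun s : ℝ => 2 + Real.log (a/s + k) + Real.log (b/s + k)) atTop
        (nhds (2 + Real.log k + Real.log k)) :=
      (tendsto_const_nhds.add (hlim1 a (by linarith))).add (hlim1 b (by linarith))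
    have hL : Tendsto Real.log atTop atTop := Real.tendsto_log_atTop
    have hA0 : Tendsto (fun s : ℝ => (Real.log (a/s + k) + Real.log (b/s + k)
        - Real.log (a*b/s + k)) / Real.log s) atTop (nhds 0) := hA.div_atTop hL
    have hB0 : Tendsto (fun s : ℝ => (2 + Real.log (a/s + k) + Real.log (b/s + k))
        / Real.log s) atTop (nhds 0) := hB.div_atTop hL
    have hfin : Tendsto (fun s : ℝ =>
        2 * (1 + (Real.log (a/s + k) + Real.log (b/s + k) - Real.log (a*b/s + k)) / Real.log s)
          / (2 + (2 + Real.log (a/s + k) + Real.log (b/s + k)) / Real.log s))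
        atTop (nhds (2 * (1 + 0) / (2 + 0))) := by
      exact (tendsto_const_nhds.mul (tendsto_const_nhds.add hA0)).div
        (tendsto_const_nhds.add hB0) (by norm_num)
    have h21 : (2 : ℝ) * (1 + 0) / (2 + 0) = 1 := by norm_num
    rw [h21] at hfin
    refine Tendsto.congr' ?_ hfin
    filter_upwards [eventually_gt_atTop (1:ℝ)] with s hs1
    have hs0 : (0:ℝ) < s := by linarith
    have hL0 : 0 < Real.log s := Real.log_pos hs1
    -- split logs
    have hsplit : ∀ c : ℝ, 0 < c → Real.log (c + k * s) = Real.log s + Real.log (c/s + k) := by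
      intro c hc
      have h1 : c + k * s = s * (c/s + k) := by field_simp
      rw [h1, Real.log_mul (ne_of_gt hs0) (by positivity)]
    set u := Real.log (a/s + k) with hu_def
    set v := Real.log (b/s + k) with hv_def
    set w := Real.log (a*b/s + k) with hw_def
    set L := Real.log s with hL_def
    have hC1 : C s = 2 * ((L + u) + (L + v) - (L + w)) / (2 + (L + u) + (L + v)) := by
      rw [hCf s (le_of_lt hs0), hsplit a (by linarith), hsplit b (by linarith),
        hsplit (a*b) (by nlinarith)]
    have hupos : 0 ≤ u := Real.log_nonneg (by
      have : 0 ≤ a / s := by positivity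
      linarith)
    have hvpos : 0 ≤ v := Real.log_nonneg (by
      have : 0 ≤ b / s := by positivity
      linarith)
    have hDne : (0:ℝ) < 2 + (L + u) + (L + v) := by positivity
    rw [hC1]
    rw [div_eq_div_iff (by positivity) hDne.ne']
    field_simp
    ring
end
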